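/- For every integer N ≥ 2, the (N−1)×(N−1) real matrix S indexed by m, n ∈ {1,…,N−1} with entries S_{m,n} = √(2/N)·sin(π·m·n/N) is symmetric and satisfies S² = 1 (the identity matrix); in particular S is orthogonal. -/

import Mathlib

/-!
Writing `sin x sin y = (cos (x - y) - cos (x + y)) / 2`, each entry of `S²` becomes a combination
of the sums `∑_{k=1}^{N-1} cos (π j k / N)` with `j = m - n` and `j = m + n`. For `0 < |j| < 2N`
the Dirichlet-kernel identity `Real.sin_mul_sum_cos` evaluates such a sum to
`-(1 + cos (π j)) / 2`, which depends only on the parity of `j`; so the two sums cancel off the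
diagonal, while on it the `j = 0` sum contributes `N - 1`.
-/

/-- The type-I discrete sine transform `S^I_{N-1}`, the `(N-1) × (N-1)` real matrix
with entries `√(2/N) sin(π m n / N)` for `m, n ∈ {1, …, N-1}`. -/
noncomputable def sineTransformI (N : ℕ) : Matrix (Fin (N - 1)) (Fin (N - 1)) ℝ :=
  fun m n => Real.sqrt (2 / N) * Real.sin (Real.pi * (m.val + 1) * (n.val + 1) / N)

open Finset Real

lemma sin_sub_mul_cos_of_sin_two_mul_eq_zero {A : ℝ} (hA : sin (2 * A) = 0) (x : ℝ) :
    sin (A - x) * cos A = -(1 + cos (2 * A)) / 2 * sin x := by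
  rw [sin_two_mul] at hA
  have hcos : cos A ^ 2 = 1 / 2 + cos (2 * A) / 2 := cos_sq A
  rw [sin_sub]
  linear_combination cos x / 2 * hA - sin x * hcos

lemma sum_range_cos_pi_mul_succ_div {N : ℕ} {j : ℤ} (hj0 : j ≠ 0) (hjN : |j| < 2 * N) :
    ∑ k ∈ range (N - 1), cos (π * j * (k + 1) / N) = -(1 + cos (π * j)) / 2 := by
  have hN : 1 ≤ N := by have := abs_pos.mpr hj0; omega
  have hNpos : (0 : ℝ) < N := by exact_mod_cast hN
  set y := π * j / N with hy
  have hsin : sin (y / 2) ≠ 0 := by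
    have habs : |(j : ℝ)| < 2 * N := by exact_mod_cast hjN
    rw [Ne, sin_eq_zero_iff_of_lt_of_lt, hy]
    · simp [hj0, pi_ne_zero, hNpos.ne']
    · rw [div_div, lt_div_iff₀ (by positivity)]
      nlinarith [neg_abs_le (j : ℝ), pi_pos]
    · rw [div_div, div_lt_iff₀ (by positivity)]
      nlinarith [le_abs_self (j : ℝ), pi_pos]
  have hterm : ∀ k : ℕ, π * j * (k + 1) / N = y * k + y := fun k => by rw [hy]; ring
  have hNy : N * y = π * j := by rw [hy]; field_simp
  have hsin_pi : sin (2 * (π * j / 2)) = 0 := by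
    rw [show 2 * (π * j / 2) = j * π by ring]; exact sin_int_mul_pi j
  apply mul_left_cancel₀ hsin
  simp only [hterm]
  rw [sin_mul_sum_cos, Nat.cast_sub hN, Nat.cast_one,
    show ((N : ℝ) - 1) * y / 2 = π * j / 2 - y / 2 by linear_combination hNy / 2,
    show ((N : ℝ) - 1 - 1) * y / 2 + y = π * j / 2 by linear_combination hNy / 2,
    sin_sub_mul_cos_of_sin_two_mul_eq_zero hsin_pi]
  ring_nf

lemma sum_range_sin_mul_sin {N a b : ℕ} (ha : 0 < a) (haN : a < N) (hb : 0 < b) (hbN : b < N) :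
    ∑ k ∈ range (N - 1), sin (π * a * (k + 1) / N) * sin (π * b * (k + 1) / N) =
      if a = b then (N / 2 : ℝ) else 0 := by
  have hprod : ∀ k : ℕ, sin (π * a * (k + 1) / N) * sin (π * b * (k + 1) / N) =
      (cos (π * ((a - b : ℤ) : ℝ) * (k + 1) / N) -
        cos (π * ((a + b : ℤ) : ℝ) * (k + 1) / N)) / 2 := by
    intro k
    push_cast
    rw [show π * (a - b) * (k + 1) / N = π * a * (k + 1) / N - π * b * (k + 1) / N by ring,
      show π * (a + b) * (k + 1) / N = π * a * (k + 1) / N + π * b * (k + 1) / N by ring,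
      cos_sub, cos_add]
    ring
  have hsum_add := sum_range_cos_pi_mul_succ_div (N := N) (j := a + b) (by omega)
    (by rw [abs_of_pos (by omega)]; omega)
  rw [sum_congr rfl fun k _ => hprod k, ← sum_div, sum_sub_distrib, hsum_add]
  split_ifs with hab
  · subst hab
    have hcos : cos (π * ((a + a : ℤ) : ℝ)) = 1 := by
      rw [show π * ((a + a : ℤ) : ℝ) = (a : ℕ) * (2 * π) by push_cast; ring]
      exact cos_nat_mul_two_pi a
    simp only [sub_self, Int.cast_zero, mul_zero, zero_mul, zero_div, cos_zero, sum_const,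
      card_range, nsmul_eq_mul, mul_one, hcos]
    rw [Nat.cast_sub (by omega)]
    ring
  · have hcos : cos (π * ((a + b : ℤ) : ℝ)) = cos (π * ((a - b : ℤ) : ℝ)) := by
      rw [show π * ((a + b : ℤ) : ℝ) = π * ((a - b : ℤ) : ℝ) + (b : ℕ) * (2 * π) by
        push_cast; ring]
      exact cos_add_nat_mul_two_pi _ b
    rw [sum_range_cos_pi_mul_succ_div (by omega) (by rw [abs_lt]; omega), hcos]
    ring

lemma sineTransformI_isSymm (N : ℕ) : (sineTransformI N).IsSymm := by
  ext m n
  simp only [Matrix.transpose_apply, sineTransformI]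
  ring_nf

lemma sineTransformI_mul_self (N : ℕ) : sineTransformI N * sineTransformI N = 1 := by
  ext m n
  have hsqrt : √(2 / N) * √(2 / N) = 2 / N := mul_self_sqrt (by positivity)
  have horth := sum_range_sin_mul_sin (N := N) (a := m + 1) (b := n + 1)
    (by omega) (by omega) (by omega) (by omega)
  push_cast at horth
  calc (sineTransformI N * sineTransformI N) m n
      = 2 / N * ∑ k ∈ range (N - 1),
          sin (π * (m + 1) * (k + 1) / N) * sin (π * (n + 1) * (k + 1) / N) := by
        rw [Matrix.mul_apply, ← Fin.sum_univ_eq_sum_range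
          (fun k => sin (π * (m + 1) * (k + 1) / N) * sin (π * (n + 1) * (k + 1) / N)), mul_sum]
        refine sum_congr rfl fun k _ => ?_
        simp only [sineTransformI]
        rw [show π * (k + 1) * (n + 1) / N = π * (n + 1) * (k + 1) / N by ring,
          mul_mul_mul_comm, hsqrt]
    _ = (1 : Matrix (Fin (N - 1)) (Fin (N - 1)) ℝ) m n := by
        have hN : (N : ℝ) ≠ 0 := by have := m.isLt; exact_mod_cast (by omega : N ≠ 0)
        simp only [horth, Matrix.one_apply, Fin.val_inj]
        split_ifs
        · field_simp
        · exact mul_zero _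

theorem sineTransformI_symm_sq_one_orthogonal_general (N : ℕ) :
    (sineTransformI N).IsSymm ∧
      sineTransformI N * sineTransformI N = 1 ∧
        sineTransformI N ∈ Matrix.orthogonalGroup (Fin (N - 1)) ℝ := by
  refine ⟨sineTransformI_isSymm N, sineTransformI_mul_self N, ?_⟩
  rw [Matrix.mem_orthogonalGroup_iff, (sineTransformI_isSymm N).eq]
  exact sineTransformI_mul_self N

/-- The type-I discrete sine transform is symmetric and squares to the identity;
in particular it is an orthogonal matrix. -/
theorem sineTransformI_symm_sq_one_orthogonal (N : ℕ) (hN : 2 ≤ N) :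
    (sineTransformI N).IsSymm ∧
      sineTransformI N * sineTransformI N = 1 ∧
        sineTransformI N ∈ Matrix.orthogonalGroup (Fin (N - 1)) ℝ :=
  sineTransformI_symm_sq_one_orthogonal_general N
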